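/- For an integer ℓ ≥ 1 and real r with 2 ≤ r < 2ℓ/(ℓ−1): in any circular r-coloring of a signed path of length ℓ with an even number of positive edges whose one endpoint is colored 0, the set of possible colors of the other endpoint is the arc [0, ℓ·r/2 − ℓ]; for a path with an odd number of positive edges it is the arc [ℓ − (ℓ−1)·r/2, r/2]. Moreover every value in these arcs is achievable. -/
import Mathlib


/-- A signed graph: two symmetric edge relations (positive and negative edges).
Parallel edges of different signs (digons) and negative loops are representable;
positive loops are disallowed (graphs in the paper have no loops unless specified,
loops occurring in circular cliques are always negative). -/
structure SGraph (V : Type) where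
  pos : V → V → Prop
  neg : V → V → Prop
  pos_symm : ∀ u v, pos u v → pos v u
  neg_symm : ∀ u v, neg u v → neg v u
  pos_irrefl : ∀ v, ¬ pos v v

namespace SGraph

variable {V W : Type}

/-- An edge-sign preserving homomorphism: preserves adjacency and edge signs. -/
def IsSpHom (G : SGraph V) (H : SGraph W) (f : V → W) : Prop :=
  (∀ u v, G.pos u v → H.pos (f u) (f v)) ∧ (∀ u v, G.neg u v → H.neg (f u) (f v))

/-- The signed graph obtained from `G` by switching at the set of vertices where `s` is `true`:
the sign of an edge is flipped exactly when its endpoints get different values of `s`. -/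
def switch (G : SGraph V) (s : V → Bool) : SGraph V where
  pos u v := (s u = s v ∧ G.pos u v) ∨ (s u ≠ s v ∧ G.neg u v)
  neg u v := (s u = s v ∧ G.neg u v) ∨ (s u ≠ s v ∧ G.pos u v)
  pos_symm := by
    rintro u v (⟨h, hp⟩ | ⟨h, hn⟩)
    · exact Or.inl ⟨h.symm, G.pos_symm u v hp⟩
    · exact Or.inr ⟨fun e => h e.symm, G.neg_symm u v hn⟩
  neg_symm := by
    rintro u v (⟨h, hn⟩ | ⟨h, hp⟩)
    · exact Or.inl ⟨h.symm, G.neg_symm u v hn⟩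
    · exact Or.inr ⟨fun e => h e.symm, G.pos_symm u v hp⟩
  pos_irrefl := by
    rintro v (⟨_, hp⟩ | ⟨h, _⟩)
    · exact G.pos_irrefl v hp
    · exact h rfl

/-- A switching homomorphism: an edge-sign preserving homomorphism after switching
at a suitable set of vertices of the source (equivalently, a vertex map preserving
adjacency and the signs of closed walks). -/
def SwHom (G : SGraph V) (H : SGraph W) : Prop :=
  ∃ (s : V → Bool) (f : V → W), (G.switch s).IsSpHom H f

/-- The underlying graph of the signed graph is bipartite. -/
def Bipartite (G : SGraph V) : Prop :=
  ∃ c : V → Bool, ∀ u v, G.pos u v ∨ G.neg u v → c u ≠ c v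

end SGraph

/-- `x` reduced modulo `r` into `[0, r)` (for `r > 0`). -/
noncomputable def rmod (x r : ℝ) : ℝ := x - r * ⌊x / r⌋

/-- The circular distance between the points `x` and `y` of the circle of
circumference `r` (the length of the shorter arc joining them). -/
noncomputable def cdist (r x y : ℝ) : ℝ := min (rmod (x - y) r) (rmod (y - x) r)

namespace SGraph

variable {V : Type}

/-- A circular `r`-coloring of a signed graph: vertices get points of a circle of
circumference `r` such that the endpoints of each positive edge are at circular
distance at least `1`, and each endpoint of a negative edge is at circular distance
at least `1` from the antipode of the other endpoint (equivalently, the endpoints of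
a negative edge are at circular distance at most `r/2 - 1`). -/
def IsCircColoring (G : SGraph V) (r : ℝ) (φ : V → ℝ) : Prop :=
  (∀ u v, G.pos u v → 1 ≤ cdist r (φ u) (φ v)) ∧
  (∀ u v, G.neg u v → 1 ≤ cdist r (φ u) (φ v + r / 2))

/-- The circular chromatic number of a signed graph. -/
noncomputable def circChrom (G : SGraph V) : ℝ :=
  sInf {r : ℝ | 1 ≤ r ∧ ∃ φ : V → ℝ, G.IsCircColoring r φ}

end SGraph

/-- The signed path of length `ℓ` on vertices `0, …, ℓ`, where the edge between
`k` and `k+1` is positive iff `s k = true`. -/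
def sPath (ℓ : ℕ) (s : ℕ → Bool) : SGraph (Fin (ℓ + 1)) where
  pos x y := ∃ k, k < ℓ ∧ s k = true ∧
    ((x.val = k ∧ y.val = k + 1) ∨ (y.val = k ∧ x.val = k + 1))
  neg x y := ∃ k, k < ℓ ∧ s k = false ∧
    ((x.val = k ∧ y.val = k + 1) ∨ (y.val = k ∧ x.val = k + 1))
  pos_symm := by
    rintro x y ⟨k, hk, hs, h⟩
    exact ⟨k, hk, hs, h.symm⟩
  neg_symm := by
    rintro x y ⟨k, hk, hs, h⟩
    exact ⟨k, hk, hs, h.symm⟩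
  pos_irrefl := by
    rintro v ⟨k, _, _, (⟨h1, h2⟩ | ⟨h1, h2⟩)⟩ <;> omega


section lemmas
variable {r : ℝ}

lemma rmod_nonneg (hr : 0 < r) (x : ℝ) : 0 ≤ rmod x r := by
  have h := Int.floor_le (x / r)
  have h2 : r * (⌊x/r⌋ : ℝ) ≤ r * (x/r) := mul_le_mul_of_nonneg_left h hr.le
  have hx : r * (x / r) = x := by field_simp
  unfold rmod; linarith

lemma rmod_lt (hr : 0 < r) (x : ℝ) : rmod x r < r := by
  have h := Int.lt_floor_add_one (x / r)
  have h2 : r * (x/r) < r * ((⌊x/r⌋ : ℝ) + 1) := (mul_lt_mul_iff_right₀ hr).2 h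
  have hx : r * (x / r) = x := by field_simp
  unfold rmod; nlinarith

lemma rmod_congr (hr : 0 < r) {x y : ℝ} (n : ℤ) (h : x - y = n * r) :
    rmod x r = rmod y r := by
  have hx : x = y + n * r := by linarith
  have hdiv : x / r = y / r + n := by rw [hx]; field_simp
  unfold rmod
  rw [hdiv, Int.floor_add_intCast, hx]
  push_cast
  ring

lemma rmod_eq_self (hr : 0 < r) {x : ℝ} (h0 : 0 ≤ x) (h1 : x < r) : rmod x r = x := by
  have : ⌊x / r⌋ = 0 := by
    rw [Int.floor_eq_zero_iff]
    constructor
    · exact div_nonneg h0 hr.le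
    · exact (div_lt_one hr).2 h1
  unfold rmod; rw [this]; simp

lemma rmod_zero (r : ℝ) : rmod 0 r = 0 := by
  unfold rmod; simp

lemma rmod_le_self (hr : 0 < r) {x : ℝ} (h0 : 0 ≤ x) : rmod x r ≤ x := by
  have : (0:ℤ) ≤ ⌊x / r⌋ := Int.floor_nonneg.2 (div_nonneg h0 hr.le)
  have h2 : (0:ℝ) ≤ r * ⌊x/r⌋ := mul_nonneg hr.le (by exact_mod_cast this)
  unfold rmod; linarith

lemma cdist_eq (hr : 0 < r) (x y : ℝ) :
    cdist r x y = min (rmod (x - y) r) (r - rmod (x - y) r) := by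
  unfold cdist
  rcases eq_or_ne (rmod (x - y) r) 0 with h | h
  · have hxy : x - y = (⌊(x-y)/r⌋ : ℤ) * r := by unfold rmod at h; linarith
    have : rmod (y - x) r = rmod 0 r := by
      apply rmod_congr hr (-⌊(x-y)/r⌋); push_cast; linarith
    rw [h, this, rmod_zero]
    simp [le_of_lt hr]
  · have h0 := rmod_nonneg hr (x - y)
    have h1 := rmod_lt hr (x - y)
    have hpos : 0 < rmod (x - y) r := lt_of_le_of_ne h0 (Ne.symm h)
    have h2 : rmod (y - x) r = r - rmod (x - y) r := by
      have e : rmod (y - x) r = rmod (r - rmod (x-y) r) r := by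
        apply rmod_congr hr (-⌊(x-y)/r⌋ - 1)
        unfold rmod; push_cast; ring
      rw [e]
      exact rmod_eq_self hr (by linarith) (by linarith)
    rw [h2]

lemma cdist_symm (r x y : ℝ) : cdist r x y = cdist r y x := min_comm _ _

lemma cdist_nonneg' (hr : 0 < r) (x y : ℝ) : 0 ≤ cdist r x y :=
  le_min (rmod_nonneg hr _) (rmod_nonneg hr _)

lemma cdist_le_half (hr : 0 < r) (x y : ℝ) : cdist r x y ≤ r / 2 := by
  rw [cdist_eq hr]
  have h0 := rmod_nonneg hr (x - y)
  have h1 := rmod_lt hr (x - y)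
  rcases le_total (rmod (x - y) r) (r/2) with h | h
  · exact le_trans (min_le_left _ _) h
  · exact le_trans (min_le_right _ _) (by linarith)

lemma cdist_of_sub (hr : 0 < r) {x y : ℝ} (h0 : 0 ≤ x - y) (h1 : x - y < r) :
    cdist r x y = min (x - y) (r - (x - y)) := by
  rw [cdist_eq hr, rmod_eq_self hr h0 h1]

lemma cdist_of_abs (hr : 0 < r) {x y : ℝ} (h : |x - y| ≤ r / 2) :
    cdist r x y = |x - y| := by
  rcases le_total 0 (x - y) with hs | hs
  · rw [abs_of_nonneg hs] at *
    rw [cdist_of_sub hr hs (by linarith)]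
    exact min_eq_left (by linarith)
  · rw [abs_of_nonpos hs] at *
    rw [cdist_symm, cdist_of_sub hr (by linarith) (by linarith)]
    rw [min_eq_left (by linarith)]
    ring

lemma cdist_self (hr : 0 < r) (x : ℝ) : cdist r x x = 0 := by
  have := cdist_of_abs hr (x := x) (y := x) (by simp; linarith)
  simpa using this

lemma cdist_intmul (hr : 0 < r) (n : ℤ) (x y : ℝ) : cdist r (x + n * r) y = cdist r x y := by
  have e1 : rmod (x + n * r - y) r = rmod (x - y) r := rmod_congr hr n (by ring)
  have e2 : rmod (y - (x + n * r)) r = rmod (y - x) r := rmod_congr hr (-n) (by push_cast; ring)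
  unfold cdist
  rw [e1, e2]

lemma cdist_antipode (hr : 0 < r) (x y : ℝ) :
    cdist r x (y + r / 2) = r / 2 - cdist r x y := by
  have h0 := rmod_nonneg hr (x - y)
  have h1 := rmod_lt hr (x - y)
  set d := rmod (x - y) r with hd
  have hsub : x - (y + r/2) - (d - r/2) = (⌊(x-y)/r⌋ : ℤ) * r := by
    rw [hd]; unfold rmod; push_cast; ring
  have key : rmod (x - (y + r/2)) r = rmod (d - r/2) r := rmod_congr hr _ hsub
  rw [cdist_eq hr x (y + r/2), key, cdist_eq hr x y, ← hd]
  rcases lt_or_ge d (r/2) with hc | hc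
  · have : rmod (d - r/2) r = d + r/2 := by
      have e : rmod (d - r/2) r = rmod (d + r/2) r := rmod_congr hr (-1) (by ring)
      rw [e, rmod_eq_self hr (by linarith) (by linarith)]
    rw [this, min_eq_right (by linarith), min_eq_left (by linarith)]
    ring
  · have : rmod (d - r/2) r = d - r/2 := rmod_eq_self hr (by linarith) (by linarith)
    rw [this, min_eq_left (by linarith), min_eq_right (by linarith)]
    ring

lemma cdist_le_rmod (r x y : ℝ) : cdist r x y ≤ rmod (x - y) r := min_le_left _ _

lemma cdist_triangle (hr : 0 < r) (x y z : ℝ) :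
    cdist r x z ≤ cdist r x y + cdist r y z := by
  have ha1 := rmod_nonneg hr (x - y); have hb1 := rmod_nonneg hr (y - x)
  have ha2 := rmod_nonneg hr (y - z); have hb2 := rmod_nonneg hr (z - y)
  have la1 := rmod_lt hr (x - y); have lb1 := rmod_lt hr (y - x)
  have la2 := rmod_lt hr (y - z); have lb2 := rmod_lt hr (z - y)
  set a1 := rmod (x - y) r; set b1 := rmod (y - x) r
  set a2 := rmod (y - z) r; set b2 := rmod (z - y) r
  -- helper: for any p q with (x - z) ≡ p - q or similar
  have key : ∀ p q : ℝ, 0 ≤ p → 0 ≤ q → p < r → q < r →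
      (∃ n : ℤ, (x - z) - (p + q) = n * r) → cdist r x z ≤ p + q := by
    intro p q hp hq hpr hqr ⟨n, hn⟩
    have e : rmod (x - z) r = rmod (p + q) r := rmod_congr hr n hn
    calc cdist r x z ≤ rmod (x - z) r := cdist_le_rmod r x z
      _ = rmod (p + q) r := e
      _ ≤ p + q := rmod_le_self hr (by linarith)
  have key' : ∀ p q : ℝ, 0 ≤ p → 0 ≤ q → p < r → q < r →
      (∃ n : ℤ, (x - z) - (p - q) = n * r) → cdist r x z ≤ p + q := by
    intro p q hp hq hpr hqr ⟨n, hn⟩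
    rcases le_total q p with hle | hle
    · have e : rmod (x - z) r = rmod (p - q) r := rmod_congr hr n hn
      calc cdist r x z ≤ rmod (x - z) r := cdist_le_rmod r x z
        _ = p - q := by rw [e]; exact rmod_eq_self hr (by linarith) (by linarith)
        _ ≤ p + q := by linarith
    · have e : rmod (z - x) r = rmod (q - p) r := rmod_congr hr (-n) (by push_cast; linarith)
      calc cdist r x z ≤ rmod (z - x) r := min_le_right _ _
        _ = q - p := by rw [e]; exact rmod_eq_self hr (by linarith) (by linarith)
        _ ≤ p + q := by linarith
  have hm1 : (x - y) - a1 = (⌊(x-y)/r⌋ : ℤ) * r := by show (x-y) - rmod (x-y) r = _; unfold rmod; ring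
  have hm2 : (y - x) - b1 = (⌊(y-x)/r⌋ : ℤ) * r := by show (y-x) - rmod (y-x) r = _; unfold rmod; ring
  have hm3 : (y - z) - a2 = (⌊(y-z)/r⌋ : ℤ) * r := by show (y-z) - rmod (y-z) r = _; unfold rmod; ring
  have hm4 : (z - y) - b2 = (⌊(z-y)/r⌋ : ℤ) * r := by show (z-y) - rmod (z-y) r = _; unfold rmod; ring
  set m1 := ⌊(x-y)/r⌋; set m2 := ⌊(y-x)/r⌋; set m3 := ⌊(y-z)/r⌋; set m4 := ⌊(z-y)/r⌋
  have c11 : cdist r x z ≤ a1 + a2 :=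
    key a1 a2 ha1 ha2 la1 la2 ⟨m1 + m3, by push_cast; linarith⟩
  have c12 : cdist r x z ≤ a1 + b2 :=
    key' a1 b2 ha1 hb2 la1 lb2 ⟨m1 - m4, by push_cast; linarith⟩
  have c21 : cdist r x z ≤ b1 + a2 := by
    have : cdist r x z ≤ a2 + b1 :=
      key' a2 b1 ha2 hb1 la2 lb1 ⟨m3 - m2, by push_cast; linarith⟩
    linarith
  have c22 : cdist r x z ≤ b1 + b2 := by
    have h' : rmod (z - x) r ≤ b2 + b1 := by
      have e : rmod (z - x) r = rmod (b2 + b1) r :=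
        rmod_congr hr (m4 + m2) (by push_cast; linarith)
      rw [e]; exact rmod_le_self hr (by linarith)
    have := min_le_right (rmod (x - z) r) (rmod (z - x) r)
    calc cdist r x z ≤ rmod (z - x) r := min_le_right _ _
      _ ≤ b2 + b1 := h'
      _ = b1 + b2 := by ring
  show cdist r x z ≤ min a1 b1 + min a2 b2
  rcases min_cases a1 b1 with ⟨e1, _⟩ | ⟨e1, _⟩ <;> rcases min_cases a2 b2 with ⟨e2, _⟩ | ⟨e2, _⟩ <;>
    rw [e1, e2] <;> assumption

end lemmas

lemma cnt_succ (s : ℕ → Bool) (k : ℕ) :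
    ((Finset.range (k+1)).filter fun j => s j = true).card
      = ((Finset.range k).filter fun j => s j = true).card + (if s k = true then 1 else 0) := by
  rw [Finset.range_add_one, Finset.filter_insert]
  split
  · rw [Finset.card_insert_of_notMem (by simp)]
  · simp

lemma cdist_half_eq {r : ℝ} (hr : 0 < r) (x : ℝ) :
    cdist r x (r / 2) = r / 2 - cdist r x 0 := by
  have := cdist_antipode hr x 0
  rwa [zero_add] at this

lemma forward_inv (ℓ : ℕ) (s : ℕ → Bool) (r : ℝ) (hr2 : 2 ≤ r)
    (φ : Fin (ℓ+1) → ℝ) (hφ : (sPath ℓ s).IsCircColoring r φ) (h0 : φ 0 = 0) :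
    ∀ k, ∀ hk : k ≤ ℓ,
      (Even ((Finset.range k).filter fun j => s j = true).card →
        cdist r (φ ⟨k, by omega⟩) 0 ≤ k * (r/2 - 1)) ∧
      (¬ Even ((Finset.range k).filter fun j => s j = true).card →
        cdist r (φ ⟨k, by omega⟩) (r/2) ≤ k * (r/2 - 1)) := by
  have hr0 : (0:ℝ) < r := by linarith
  intro k
  induction k with
  | zero =>
    intro hk
    constructor
    · intro _
      have hz : (⟨0, by omega⟩ : Fin (ℓ+1)) = 0 := by ext; simp
      rw [hz, h0, cdist_self hr0]
      simp
    · intro h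
      exact absurd (by simp) h
  | succ k ih =>
    intro hk
    obtain ⟨ih1, ih2⟩ := ih (by omega)
    have hklt : k < ℓ := by omega
    have hsym : cdist r (φ ⟨k, by omega⟩) (r/2) = r/2 - cdist r (φ ⟨k, by omega⟩) 0 :=
      cdist_half_eq hr0 _
    have hsym' : cdist r (φ ⟨k+1, by omega⟩) (r/2) = r/2 - cdist r (φ ⟨k+1, by omega⟩) 0 :=
      cdist_half_eq hr0 _
    have hcast : ((k+1 : ℕ) : ℝ) * (r/2 - 1) = k * (r/2 - 1) + (r/2 - 1) := by push_cast; ring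
    rcases hs : s k with _ | _
    · -- negative edge
      have hneg : (sPath ℓ s).neg ⟨k+1, by omega⟩ ⟨k, by omega⟩ :=
        ⟨k, hklt, hs, Or.inr ⟨rfl, rfl⟩⟩
      have h1 := hφ.2 _ _ hneg
      rw [cdist_antipode hr0] at h1
      have hd : cdist r (φ ⟨k+1, by omega⟩) (φ ⟨k, by omega⟩) ≤ r/2 - 1 := by linarith
      have hcnt : ((Finset.range (k+1)).filter fun j => s j = true).card
          = ((Finset.range k).filter fun j => s j = true).card := by
        rw [cnt_succ]; simp [hs]
      rw [hcnt, hcast]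
      constructor
      · intro he
        have := ih1 he
        have htri := cdist_triangle hr0 (φ ⟨k+1, by omega⟩) (φ ⟨k, by omega⟩) 0
        linarith
      · intro he
        have := ih2 he
        have htri := cdist_triangle hr0 (φ ⟨k+1, by omega⟩) (φ ⟨k, by omega⟩) (r/2)
        linarith
    · -- positive edge
      have hpos : (sPath ℓ s).pos ⟨k+1, by omega⟩ ⟨k, by omega⟩ :=
        ⟨k, hklt, hs, Or.inr ⟨rfl, rfl⟩⟩
      have h1 := hφ.1 _ _ hpos
      have hcnt : ((Finset.range (k+1)).filter fun j => s j = true).card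
          = ((Finset.range k).filter fun j => s j = true).card + 1 := by
        rw [cnt_succ]; simp [hs]
      rw [hcnt, hcast, Nat.even_add_one]
      constructor
      · intro he
        have hodd := ih2 he
        have htri := cdist_triangle hr0 (φ ⟨k+1, by omega⟩) (φ ⟨k, by omega⟩) (r/2)
        have htri2 := cdist_triangle hr0 (φ ⟨k+1, by omega⟩) (r/2) (φ ⟨k, by omega⟩)
        have hsw : cdist r (r/2) (φ ⟨k, by omega⟩) = cdist r (φ ⟨k, by omega⟩) (r/2) :=
          cdist_symm _ _ _
        -- 1 ≤ cdist(φ(k+1), φ k) ≤ cdist(φ(k+1), r/2) + cdist(φ k, r/2)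
        -- so cdist(φ(k+1), r/2) ≥ 1 - k(r/2-1); then use hsym'
        linarith
      · intro he
        push_neg at he
        have heven := ih1 he
        have htri2 := cdist_triangle hr0 (φ ⟨k+1, by omega⟩) 0 (φ ⟨k, by omega⟩)
        have hsw : cdist r 0 (φ ⟨k, by omega⟩) = cdist r (φ ⟨k, by omega⟩) 0 :=
          cdist_symm _ _ _
        linarith

lemma cdist_zero_eq {r : ℝ} (hr : 0 < r) {t : ℝ} (h0 : 0 ≤ t) (h1 : t ≤ r/2) :
    cdist r t 0 = t := by
  have := cdist_of_sub hr (x := t) (y := 0) (by linarith) (by linarith)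
  rw [sub_zero] at this
  rw [this, min_eq_left (by linarith)]

lemma backward_col (ℓ : ℕ) (s : ℕ → Bool) (r : ℝ) (hr2 : 2 ≤ r) (u : ℝ)
    (hu1 : -(r/2 - 1) ≤ u) (hu2 : u ≤ r/2 - 1) :
    (sPath ℓ s).IsCircColoring r
      (fun v : Fin (ℓ+1) =>
        (((Finset.range v.val).filter fun j => s j = true).card : ℝ) * (r/2) + v.val * u) := by
  have hr0 : (0:ℝ) < r := by linarith
  set A : ℕ → ℝ := fun k =>
    (((Finset.range k).filter fun j => s j = true).card : ℝ) * (r/2) + k * u with hA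
  have hstepT : ∀ k, s k = true → A (k+1) = A k + (r/2 + u) := by
    intro k hk
    simp only [hA, cnt_succ s k, hk]
    push_cast
    ring
  have hstepF : ∀ k, s k = false → A (k+1) = A k + u := by
    intro k hk
    simp only [hA, cnt_succ s k, hk]
    push_cast
    ring
  have hpos : ∀ k, s k = true → 1 ≤ cdist r (A k) (A (k+1)) := by
    intro k hk
    rw [cdist_symm]
    have hd : A (k+1) - A k = r/2 + u := by rw [hstepT k hk]; ring
    have h0' : (0:ℝ) ≤ A (k+1) - A k := by rw [hd]; linarith
    have h1' : A (k+1) - A k < r := by rw [hd]; linarith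
    rw [cdist_of_sub hr0 h0' h1', hd]
    exact le_min (by linarith) (by linarith)
  have hneg : ∀ k, s k = false → cdist r (A k) (A (k+1)) ≤ r/2 - 1 := by
    intro k hk
    have hd : A k - A (k+1) = -u := by rw [hstepF k hk]; ring
    have habs : |A k - A (k+1)| ≤ r/2 := by
      rw [hd, abs_neg, abs_le]; constructor <;> linarith
    rw [cdist_of_abs hr0 habs, hd, abs_neg, abs_le]
    constructor <;> linarith
  constructor
  · rintro a b ⟨k, hk, hs, (⟨ha, hb⟩ | ⟨hb, ha⟩)⟩
    · show 1 ≤ cdist r (A a.val) (A b.val)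
      rw [ha, hb]
      exact hpos k hs
    · show 1 ≤ cdist r (A a.val) (A b.val)
      rw [ha, hb, cdist_symm]
      exact hpos k hs
  · rintro a b ⟨k, hk, hs, (⟨ha, hb⟩ | ⟨hb, ha⟩)⟩
    · show 1 ≤ cdist r (A a.val) (A b.val + r/2)
      rw [cdist_antipode hr0, ha, hb]
      have := hneg k hs
      linarith
    · show 1 ≤ cdist r (A a.val) (A b.val + r/2)
      rw [cdist_antipode hr0, ha, hb, cdist_symm]
      have := hneg k hs
      linarith

lemma backward_exists (ℓ : ℕ) (s : ℕ → Bool) (r : ℝ) (hr2 : 2 ≤ r)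
    (u t : ℝ) (hu1 : -(r/2-1) ≤ u) (hu2 : u ≤ r/2 - 1)
    (ht0 : 0 ≤ t) (ht1 : t ≤ r/2)
    (hsum : ∃ n : ℤ,
      (((Finset.range ℓ).filter fun j => s j = true).card : ℝ) * (r/2) + ℓ * u = t + n * r) :
    ∃ φ : Fin (ℓ + 1) → ℝ, (sPath ℓ s).IsCircColoring r φ ∧ φ 0 = 0 ∧
      cdist r (φ (Fin.last ℓ)) (φ 0) = t := by
  have hr0 : (0:ℝ) < r := by linarith
  refine ⟨fun v : Fin (ℓ+1) =>
      (((Finset.range v.val).filter fun j => s j = true).card : ℝ) * (r/2) + v.val * u,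
    backward_col ℓ s r hr2 u hu1 hu2, ?_, ?_⟩
  · show (((Finset.range ((0 : Fin (ℓ+1)).val)).filter fun j => s j = true).card : ℝ) * (r/2)
      + ((0 : Fin (ℓ+1)).val : ℝ) * u = 0
    simp
  · have h00 : (((Finset.range ((0 : Fin (ℓ+1)).val)).filter fun j => s j = true).card : ℝ) * (r/2)
      + ((0 : Fin (ℓ+1)).val : ℝ) * u = 0 := by simp
    obtain ⟨n, hn⟩ := hsum
    have hlast : (((Finset.range ((Fin.last ℓ).val)).filter fun j => s j = true).card : ℝ) * (r/2)
      + ((Fin.last ℓ).val : ℝ) * u = t + n * r := by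
      rw [Fin.val_last]; exact hn
    show cdist r _ _ = t
    beta_reduce
    rw [h00, hlast]
    rw [show (t + (n:ℝ) * r) = t + (n:ℤ) * r by push_cast; ring]
    rw [cdist_intmul hr0, cdist_zero_eq hr0 ht0 ht1]

/-- for `ℓ ≥ 1` and `2 ≤ r < 2ℓ/(ℓ-1)` (stated cross-multiplied), in a
circular `r`-coloring of a signed path of length `ℓ` with one endpoint colored `0`,
the possible positions of the other endpoint form the arc `[0, ℓr/2 - ℓ]` if the path
has an even number of positive edges, and the arc `[ℓ - (ℓ-1)r/2, r/2]` if it has an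
odd number of positive edges (arcs described by the circular distance from the fixed
endpoint, using the reflection symmetry of the set of colorings); moreover, every
value in these arcs is achieved. -/
theorem path_indicator_zones (ℓ : ℕ) (hl : 1 ≤ ℓ) (r : ℝ) (hr2 : 2 ≤ r)
    (hrl : r * ((ℓ : ℝ) - 1) < 2 * ℓ) (s : ℕ → Bool) :
    (Even ((Finset.range ℓ).filter fun k => s k = true).card →
      ∀ t : ℝ,
        (∃ φ : Fin (ℓ + 1) → ℝ, (sPath ℓ s).IsCircColoring r φ ∧ φ 0 = 0 ∧
          cdist r (φ (Fin.last ℓ)) (φ 0) = t) ↔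
        t ∈ Set.Icc (0 : ℝ) ((ℓ : ℝ) * r / 2 - ℓ)) ∧
    (Odd ((Finset.range ℓ).filter fun k => s k = true).card →
      ∀ t : ℝ,
        (∃ φ : Fin (ℓ + 1) → ℝ, (sPath ℓ s).IsCircColoring r φ ∧ φ 0 = 0 ∧
          cdist r (φ (Fin.last ℓ)) (φ 0) = t) ↔
        t ∈ Set.Icc ((ℓ : ℝ) - ((ℓ : ℝ) - 1) * r / 2) (r / 2)) := by
  have hr0 : (0:ℝ) < r := by linarith
  have hlR : (1:ℝ) ≤ (ℓ:ℝ) := by exact_mod_cast hl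
  have hl0 : (0:ℝ) < (ℓ:ℝ) := by linarith
  have hlne : (ℓ:ℝ) ≠ 0 := ne_of_gt hl0
  -- ℓ * r / 2 - ℓ < r / 2
  have hhalf : (ℓ:ℝ) * r / 2 - (ℓ:ℝ) < r / 2 := by nlinarith
  -- 0 < ℓ - (ℓ - 1) * r / 2
  have hlow : (0:ℝ) < (ℓ:ℝ) - ((ℓ:ℝ) - 1) * r / 2 := by nlinarith
  have hringE : (ℓ:ℝ) * (r/2 - 1) = (ℓ:ℝ) * r / 2 - ℓ := by ring
  constructor
  · intro hev t
    constructor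
    · rintro ⟨φ, hφ, h0, ht⟩
      have inv := (forward_inv ℓ s r hr2 φ hφ h0 ℓ le_rfl).1 hev
      have heq : φ (Fin.last ℓ) = φ (⟨ℓ, by omega⟩ : Fin (ℓ+1)) := rfl
      rw [← ht, h0, heq]
      exact ⟨cdist_nonneg' hr0 _ _, by linarith⟩
    · rintro ⟨ht0, ht1⟩
      have htr2 : t ≤ r/2 := by linarith
      refine backward_exists ℓ s r hr2 (t / ℓ) t ?_ ?_ ht0 htr2 ?_
      · have : (0:ℝ) ≤ t / ℓ := div_nonneg ht0 hl0.le
        linarith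
      · rw [div_le_iff₀ hl0]; nlinarith
      · obtain ⟨m, hm⟩ := hev
        refine ⟨m, ?_⟩
        rw [hm]
        push_cast
        field_simp
        ring
  · intro hodd t
    have hne : ¬ Even ((Finset.range ℓ).filter fun k => s k = true).card := by
      rcases hodd with ⟨m, hm⟩
      rw [Nat.even_iff, hm]
      omega
    constructor
    · rintro ⟨φ, hφ, h0, ht⟩
      have inv := (forward_inv ℓ s r hr2 φ hφ h0 ℓ le_rfl).2 hne
      have heq : φ (Fin.last ℓ) = φ (⟨ℓ, by omega⟩ : Fin (ℓ+1)) := rfl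
      have hhe := cdist_half_eq hr0 (φ (⟨ℓ, by omega⟩ : Fin (ℓ+1)))
      rw [← ht, h0, heq]
      constructor
      · nlinarith [inv, hhe]
      · exact cdist_le_half hr0 _ _
    · rintro ⟨ht0, ht1⟩
      have ht0' : (0:ℝ) ≤ t := by linarith
      refine backward_exists ℓ s r hr2 ((t - r/2) / ℓ) t ?_ ?_ ht0' ht1 ?_
      · rw [le_div_iff₀ hl0]; nlinarith
      · have : (t - r/2) / ℓ ≤ 0 := div_nonpos_of_nonpos_of_nonneg (by linarith) hl0.le
        linarith
      · obtain ⟨m, hm⟩ := hodd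
        refine ⟨m, ?_⟩
        rw [hm]
        push_cast
        field_simp
        ring
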